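/- Let g be a (right) Leibniz algebra over a field k of characteristic zero. For every n ≥ 1, every t ≥ 2, every X ∈ g^{⊗n} and every Y ∈ L_t, the Leibniz differential satisfies d_{n+t}(X⊗Y) = (d_n X)⊗Y + (−1)^n X⊗(d_t Y). -/

import Mathlib

/-!
Write `δ_y` for the derivation of the tensor algebra `T(g)` extending right multiplication
`a ↦ a y` on `g`. Appending one letter to a homogeneous `W` of degree `m` gives
`d(W ⊗ y) = dW ⊗ y + (-1)^m δ_y W`. Call `Y` a primitive factor when
`d(x ⊗ Y) = dx ⊗ Y + (-1)^|x| x ⊗ dY` for every pure tensor `x` of positive length; this is a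
linear condition on `Y`. It holds for `a ⊗ y + y ⊗ a` by direct computation, and it passes
from `Z` to `Z ⊗ y - (-1)^|Z| y ⊗ Z` because the two `δ_y`-cross terms cancel. Since `L_t`,
`t ≥ 2`, is spanned by such elements, all of `L_t` consists of primitive factors, and the
identity then extends linearly from pure tensors `x` to all of `g^{⊗n}`.
-/

/-- The pure tensor `x 0 ⊗ x 1 ⊗ ... ⊗ x (n-1)`, viewed inside the tensor algebra
`T(g) = ⊕ₙ g^{⊗n}`. -/
noncomputable def pt (k : Type*) [CommSemiring k] {g : Type*} [AddCommMonoid g] [Module k g]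
    {n : ℕ} (x : Fin n → g) : TensorAlgebra k g :=
  (List.ofFn fun i => TensorAlgebra.ι k (x i)).prod

/-- The degree-`n` component `g^{⊗n}` of the tensor algebra: the span of the pure tensors of
length `n`. -/
noncomputable def tensorGrade (k : Type*) [CommSemiring k] (g : Type*) [AddCommMonoid g]
    [Module k g] (n : ℕ) : Submodule k (TensorAlgebra k g) :=
  Submodule.span k {z | ∃ x : Fin n → g, z = pt k x}

open TensorAlgebra (ι)

section PureTensors

variable {k : Type*} [CommSemiring k] {g : Type*} [AddCommMonoid g] [Module k g]

lemma pt_one (x : Fin 1 → g) : pt k x = ι k (x 0) := by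
  simp [pt]

lemma pt_snoc {n : ℕ} (x : Fin n → g) (y : g) :
    pt k (Fin.snoc x y) = pt k x * ι k y := by
  rw [pt, List.ofFn_succ', List.concat_eq_append, List.prod_append, List.prod_singleton]
  simp [pt]

lemma pt_append {m n : ℕ} (x : Fin m → g) (z : Fin n → g) :
    pt k (Fin.append x z) = pt k x * pt k z := by
  simp [pt, List.ofFn_add, List.prod_append]

lemma pt_mem_tensorGrade {n : ℕ} (x : Fin n → g) : pt k x ∈ tensorGrade k g n :=
  Submodule.subset_span ⟨x, rfl⟩

lemma tensorGrade_one : tensorGrade k g 1 = LinearMap.range (ι k) := by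
  rw [tensorGrade, ← (LinearMap.range (ι k)).span_eq]
  congr 1
  ext z
  simp only [Set.mem_ofPred_eq, pt_one, SetLike.mem_coe, LinearMap.mem_range]
  exact ⟨fun ⟨x, hx⟩ => ⟨x 0, hx.symm⟩, fun ⟨y, hy⟩ => ⟨fun _ => y, hy.symm⟩⟩

lemma ι_mem_tensorGrade_one (y : g) : ι k y ∈ tensorGrade k g 1 := by
  rw [tensorGrade_one]
  exact LinearMap.mem_range_self _ y

lemma tensorGrade_mul_le (m n : ℕ) :
    tensorGrade k g m * tensorGrade k g n ≤ tensorGrade k g (m + n) := by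
  rw [tensorGrade, tensorGrade, Submodule.span_mul_span]
  refine Submodule.span_mono ?_
  rintro _ ⟨_, ⟨x, rfl⟩, _, ⟨z, rfl⟩, rfl⟩
  exact ⟨Fin.append x z, (pt_append x z).symm⟩

lemma mul_mem_tensorGrade {m n : ℕ} {X Y : TensorAlgebra k g} (hX : X ∈ tensorGrade k g m)
    (hY : Y ∈ tensorGrade k g n) : X * Y ∈ tensorGrade k g (m + n) :=
  tensorGrade_mul_le m n (Submodule.mul_mem_mul hX hY)

end PureTensors

lemma Fin.snoc_castSucc_succAbove {α : Type*} {m : ℕ} (x : Fin (m + 1) → α) (y : α)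
    (j : Fin (m + 1)) :
    (fun a => (Fin.snoc x y : Fin (m + 2) → α) (j.castSucc.succAbove a))
      = Fin.snoc (fun a => x (j.succAbove a)) y := by
  funext a
  induction a using Fin.lastCases with
  | last => simp [(Fin.castSucc_lt_last j).ne]
  | cast a => simp [Fin.castSucc_succAbove_castSucc]

section InducedDerivation

variable {k : Type*} [CommRing k] {g : Type*} [AddCommGroup g] [Module k g] (f : g →ₗ[k] g)

local notation "T" => TensorAlgebra k g

/-- A derivation of `T` is the `ε`-component of an algebra map into the dual numbers `T[ε]`. -/
noncomputable def inducedDerivationLift : T →ₐ[k] TrivSqZeroExt T T :=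
  TensorAlgebra.lift k <| (TrivSqZeroExt.inlAlgHom k T T).toLinearMap ∘ₗ ι k +
    (TrivSqZeroExt.inrHom T T).restrictScalars k ∘ₗ ι k ∘ₗ f

noncomputable def inducedDerivation : T →ₗ[k] T :=
  (TrivSqZeroExt.sndHom T T).restrictScalars k ∘ₗ (inducedDerivationLift f).toLinearMap

lemma fst_inducedDerivationLift (u : T) : (inducedDerivationLift f u).fst = u := by
  suffices (TrivSqZeroExt.fstHom k T T).comp (inducedDerivationLift f) = AlgHom.id k T from
    DFunLike.congr_fun this u
  ext a
  simp [inducedDerivationLift]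

@[simp] lemma inducedDerivation_ι (a : g) : inducedDerivation f (ι k a) = ι k (f a) := by
  simp [inducedDerivation, inducedDerivationLift]

lemma inducedDerivation_mul (u v : T) :
    inducedDerivation f (u * v) = inducedDerivation f u * v + u * inducedDerivation f v := by
  simp only [inducedDerivation, LinearMap.comp_apply, AlgHom.toLinearMap_apply, map_mul,
    LinearMap.restrictScalars_apply, TrivSqZeroExt.sndHom_apply, TrivSqZeroExt.snd_mul,
    fst_inducedDerivationLift, smul_eq_mul, op_smul_eq_mul]
  exact add_comm _ _

lemma inducedDerivation_pt {n : ℕ} (x : Fin n → g) :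
    inducedDerivation f (pt k x) = ∑ i, pt k (Function.update x i (f (x i))) := by
  induction n with
  | zero => simp [pt, inducedDerivation]
  | succ n ih =>
    induction x using Fin.snocCases with | _ x y
    simp only [pt_snoc, inducedDerivation_mul, ih, inducedDerivation_ι, Fin.sum_univ_castSucc,
      Fin.snoc_castSucc, Fin.snoc_last, ← Fin.snoc_update, Fin.update_snoc_last, Finset.sum_mul]

end InducedDerivation

section LeibnizDifferential

variable {k : Type*} [CommRing k] {g : Type*} [AddCommGroup g] [Module k g]

def IsLeibnizDifferential (mul : g →ₗ[k] g →ₗ[k] g)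
    (D : TensorAlgebra k g →ₗ[k] TensorAlgebra k g) : Prop :=
  ∀ (m : ℕ) (x : Fin (m + 1) → g),
    D (pt k x) = ∑ j : Fin (m + 1),
      ∑ i ∈ Finset.univ.filter (fun i : Fin m => i.castSucc < j),
        ((-1 : k) ^ (j : ℕ)) •
          pt k (Function.update (fun a : Fin m => x (j.succAbove a)) i
            (mul (x i.castSucc) (x j)))

def primitiveFactors (D : TensorAlgebra k g →ₗ[k] TensorAlgebra k g) :
    Submodule k (TensorAlgebra k g) where
  carrier := {Y | ∀ (p : ℕ) (x : Fin (p + 1) → g),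
    D (pt k x * Y) = D (pt k x) * Y + (-1 : k) ^ (p + 1) • (pt k x * D Y)}
  add_mem' {Y Y'} hY hY' p x := by
    simp only [Set.mem_ofPred_eq] at hY hY'
    simp only [mul_add, map_add, hY p x, hY' p x, smul_add]
    abel
  zero_mem' p x := by simp
  smul_mem' c Y hY p x := by
    simp only [Set.mem_ofPred_eq] at hY
    simp only [mul_smul_comm, map_smul, hY p x, smul_add, smul_comm c]

variable {mul : g →ₗ[k] g →ₗ[k] g} {D : TensorAlgebra k g →ₗ[k] TensorAlgebra k g}

lemma map_mul_of_mem_primitiveFactors {n : ℕ} {X Y : TensorAlgebra k g}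
    (hX : X ∈ tensorGrade k g (n + 1)) (hY : Y ∈ primitiveFactors D) :
    D (X * Y) = D X * Y + (-1 : k) ^ (n + 1) • (X * D Y) := by
  induction hX using Submodule.span_induction with
  | mem _ hz =>
    obtain ⟨x, rfl⟩ := hz
    exact hY n x
  | zero => simp
  | add a b _ _ ha hb =>
    simp only [add_mul, map_add, ha, hb, smul_add]
    abel
  | smul c a _ ha =>
    simp only [smul_mul_assoc, map_smul, ha, smul_add, smul_comm c]

namespace IsLeibnizDifferential

variable (hD : IsLeibnizDifferential mul D)
include hD

lemma map_ι (y : g) : D (ι k y) = 0 := by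
  simpa [pt_one] using hD 0 (fun _ => y)

lemma map_pt_snoc {m : ℕ} (x : Fin (m + 1) → g) (y : g) :
    D (pt k (Fin.snoc x y)) = D (pt k x) * ι k y
      + (-1 : k) ^ (m + 1) • ∑ i, pt k (Function.update x i (mul (x i) y)) := by
  rw [hD (m + 1) (Fin.snoc x y), Fin.sum_univ_castSucc]
  congr 1
  · rw [hD m x, Finset.sum_mul]
    refine Finset.sum_congr rfl fun j _ => ?_
    rw [Finset.sum_mul, Finset.sum_filter, Finset.sum_filter, Fin.sum_univ_castSucc,
      if_neg (by simpa using Fin.le_last j), add_zero]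
    refine Finset.sum_congr rfl fun i _ => ?_
    simp only [Fin.castSucc_lt_castSucc_iff, Fin.snoc_castSucc_succAbove, Fin.snoc_castSucc,
      ← Fin.snoc_update, pt_snoc, Fin.val_castSucc, smul_mul_assoc]
  · simp [Finset.smul_sum, Fin.castSucc_lt_last]

lemma map_mul_ι {m : ℕ} {W : TensorAlgebra k g} (hW : W ∈ tensorGrade k g (m + 1)) (y : g) :
    D (W * ι k y) = D W * ι k y + (-1 : k) ^ (m + 1) • inducedDerivation (mul.flip y) W := by
  induction hW using Submodule.span_induction with
  | mem _ hz =>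
    obtain ⟨x, rfl⟩ := hz
    simp [← pt_snoc, hD.map_pt_snoc, inducedDerivation_pt]
  | zero => simp
  | add a b _ _ ha hb =>
    simp only [add_mul, map_add, ha, hb, smul_add]
    abel
  | smul c a _ ha =>
    simp only [smul_mul_assoc, map_smul, ha, smul_add, smul_comm c]

lemma ι_mul_ι_add_mem_primitiveFactors (a y : g) :
    ι k a * ι k y + ι k y * ι k a ∈ primitiveFactors D := by
  intro p x
  have hxuv (u v : g) : D (pt k x * ι k u * ι k v) = D (pt k x * ι k u) * ι k v
      + (-1 : k) ^ (p + 2) • inducedDerivation (mul.flip v) (pt k x * ι k u) :=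
    hD.map_mul_ι (by rw [← pt_snoc]; exact pt_mem_tensorGrade _) v
  have hxu (u : g) : D (pt k x * ι k u)
      = D (pt k x) * ι k u + (-1 : k) ^ (p + 1) • inducedDerivation (mul.flip u) (pt k x) :=
    hD.map_mul_ι (pt_mem_tensorGrade x) u
  have huv (u v : g) : D (ι k u * ι k v) = -ι k (mul u v) := by
    simpa [hD.map_ι] using hD.map_mul_ι (m := 0) (ι_mem_tensorGrade_one u) v
  simp only [mul_add, map_add, ← mul_assoc, hxuv, hxu, huv, inducedDerivation_mul,
    inducedDerivation_ι, LinearMap.flip_apply]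
  simp only [add_mul, smul_mul_assoc, mul_neg, mul_assoc, pow_succ]
  module

lemma mul_ι_sub_mem_primitiveFactors {s : ℕ} {Z : TensorAlgebra k g}
    (hZg : Z ∈ tensorGrade k g (s + 1)) (hZ : Z ∈ primitiveFactors D) (y : g) :
    Z * ι k y - (-1 : k) ^ (s + 1) • (ι k y * Z) ∈ primitiveFactors D := by
  intro p x
  have hxZ : pt k x * Z ∈ tensorGrade k g (p + 1 + s + 1) := by
    rw [add_assoc]
    exact mul_mem_tensorGrade (pt_mem_tensorGrade x) hZg
  have hxZy : D (pt k x * Z * ι k y) = D (pt k x * Z) * ι k y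
      + (-1 : k) ^ (p + 1 + s + 1) • inducedDerivation (mul.flip y) (pt k x * Z) :=
    hD.map_mul_ι hxZ y
  have hxyZ : D (pt k x * ι k y * Z)
      = D (pt k x * ι k y) * Z + (-1 : k) ^ (p + 2) • (pt k x * ι k y * D Z) := by
    rw [← pt_snoc]
    exact hZ (p + 1) (Fin.snoc x y)
  have hxy : D (pt k x * ι k y)
      = D (pt k x) * ι k y + (-1 : k) ^ (p + 1) • inducedDerivation (mul.flip y) (pt k x) :=
    hD.map_mul_ι (pt_mem_tensorGrade x) y
  have hZy : D (Z * ι k y)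
      = D Z * ι k y + (-1 : k) ^ (s + 1) • inducedDerivation (mul.flip y) Z :=
    hD.map_mul_ι hZg y
  have hyZ : D (ι k y * Z) = -(ι k y * D Z) := by
    simpa [pt_one, hD.map_ι] using hZ 0 (fun _ => y)
  simp only [mul_sub, mul_smul_comm, map_sub, map_smul, ← mul_assoc, hxZy, hxyZ, hxy, hZy, hyZ,
    hZ p x, inducedDerivation_mul]
  simp only [add_mul, mul_add, smul_mul_assoc, mul_smul_comm, mul_neg, mul_assoc, pow_succ,
    pow_add]
  module

end IsLeibnizDifferential

end LeibnizDifferential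

section LeftNormedBrackets

variable {k : Type*} [CommRing k] {g : Type*} [AddCommGroup g] [Module k g]
  (L : ℕ → Submodule k (TensorAlgebra k g)) (hL1 : L 1 = tensorGrade k g 1)
  (hLsucc : ∀ n : ℕ, 1 ≤ n → L (n + 1) =
    Submodule.span k {z | ∃ X ∈ L n, ∃ y : g,
      z = X * TensorAlgebra.ι k y - ((-1 : k) ^ n) • (TensorAlgebra.ι k y * X)})
include hL1 hLsucc

lemma le_tensorGrade_of_leftNormed (s : ℕ) : L (s + 1) ≤ tensorGrade k g (s + 1) := by
  induction s with
  | zero => exact hL1.le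
  | succ s ih =>
    rw [hLsucc (s + 1) (by omega), Submodule.span_le]
    rintro _ ⟨Z, hZ, y, rfl⟩
    refine Submodule.sub_mem _ (mul_mem_tensorGrade (ih hZ) (ι_mem_tensorGrade_one y))
      (Submodule.smul_mem _ _ ?_)
    rw [add_comm]
    exact mul_mem_tensorGrade (ι_mem_tensorGrade_one y) (ih hZ)

lemma le_primitiveFactors_of_leftNormed {mul : g →ₗ[k] g →ₗ[k] g}
    {D : TensorAlgebra k g →ₗ[k] TensorAlgebra k g} (hD : IsLeibnizDifferential mul D)
    (t : ℕ) :
    L (t + 2) ≤ primitiveFactors D := by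
  induction t with
  | zero =>
    rw [hLsucc 1 le_rfl, Submodule.span_le]
    rintro _ ⟨X, hX, y, rfl⟩
    rw [hL1, tensorGrade_one] at hX
    obtain ⟨a, rfl⟩ := hX
    rw [pow_one, neg_one_smul, sub_neg_eq_add]
    exact hD.ι_mul_ι_add_mem_primitiveFactors a y
  | succ t ih =>
    rw [hLsucc (t + 2) (by omega), Submodule.span_le]
    rintro _ ⟨Z, hZ, y, rfl⟩
    exact hD.mul_ι_sub_mem_primitiveFactors
      (le_tensorGrade_of_leftNormed L hL1 hLsucc (t + 1) hZ) (ih hZ) y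

end LeftNormedBrackets

/-- Here `n + 1` and `t + 2` are the paper's `n ≥ 1` and `t ≥ 2`. -/
theorem leibniz_differential_primitive_factor_general
    {k : Type*} [Field k]
    {g : Type*} [AddCommGroup g] [Module k g]
    (mul : g →ₗ[k] g →ₗ[k] g)
    (D : TensorAlgebra k g →ₗ[k] TensorAlgebra k g)
    (hD : ∀ (m : ℕ) (x : Fin (m + 1) → g),
      D (pt k x) = ∑ j : Fin (m + 1),
        ∑ i ∈ Finset.univ.filter (fun i : Fin m => i.castSucc < j),
          ((-1 : k) ^ (j : ℕ)) •
            pt k (Function.update (fun a : Fin m => x (j.succAbove a)) i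
              (mul (x i.castSucc) (x j))))
    (L : ℕ → Submodule k (TensorAlgebra k g))
    (hL1 : L 1 = tensorGrade k g 1)
    (hLsucc : ∀ n : ℕ, 1 ≤ n → L (n + 1) =
      Submodule.span k {z | ∃ X ∈ L n, ∃ y : g,
        z = X * TensorAlgebra.ι k y - ((-1 : k) ^ n) • (TensorAlgebra.ι k y * X)})
    (n t : ℕ) (X : TensorAlgebra k g) (hX : X ∈ tensorGrade k g (n + 1))
    (Y : TensorAlgebra k g) (hY : Y ∈ L (t + 2)) :
    D (X * Y) = D X * Y + ((-1 : k) ^ (n + 1)) • (X * D Y) :=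
  map_mul_of_mem_primitiveFactors hX (le_primitiveFactors_of_leftNormed L hL1 hLsucc hD t hY)

/-- for a (right) Leibniz algebra `g` over a field `k` of characteristic zero,
`n ≥ 1`, `t ≥ 2`, `X ∈ g^{⊗n}` and `Y ∈ L_t`, the Leibniz differential satisfies
`d(X⊗Y) = (dX)⊗Y + (−1)ⁿ X⊗(dY)` (below `n, t` of the statement are `n+1, t+2`). -/
theorem leibniz_differential_primitive_factor
    {k : Type*} [Field k] [CharZero k]
    {g : Type*} [AddCommGroup g] [Module k g]
    (mul : g →ₗ[k] g →ₗ[k] g)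
    (hleib : ∀ x y z : g, mul x (mul y z) = mul (mul x y) z - mul (mul x z) y)
    (D : TensorAlgebra k g →ₗ[k] TensorAlgebra k g)
    (hD : ∀ (m : ℕ) (x : Fin (m + 1) → g),
      D (pt k x) = ∑ j : Fin (m + 1),
        ∑ i ∈ Finset.univ.filter (fun i : Fin m => i.castSucc < j),
          ((-1 : k) ^ (j : ℕ)) •
            pt k (Function.update (fun a : Fin m => x (j.succAbove a)) i
              (mul (x i.castSucc) (x j))))
    (L : ℕ → Submodule k (TensorAlgebra k g))
    (hL1 : L 1 = tensorGrade k g 1)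
    (hLsucc : ∀ n : ℕ, 1 ≤ n → L (n + 1) =
      Submodule.span k {z | ∃ X ∈ L n, ∃ y : g,
        z = X * TensorAlgebra.ι k y - ((-1 : k) ^ n) • (TensorAlgebra.ι k y * X)})
    (n t : ℕ) (X : TensorAlgebra k g) (hX : X ∈ tensorGrade k g (n + 1))
    (Y : TensorAlgebra k g) (hY : Y ∈ L (t + 2)) :
    D (X * Y) = D X * Y + ((-1 : k) ^ (n + 1)) • (X * D Y) :=
  leibniz_differential_primitive_factor_general mul D hD L hL1 hLsucc n t X hX Y hY
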